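/- Let X = ℝ/ℤ with a translation-invariant metric d such that g(t) := |e^{2πit} − 1| / d(t+ℤ, ℤ) is monotonically decreasing on (0, 1/2]. Then the map f : X → ℂ, f(t+ℤ) = e^{2πit}, has distortion dist(f) = lim_{t→0} g(t)/g(1/2), this equals the Euclidean distortion c₂(X), and it is at most π/2. -/

import Mathlib

/-- The circle map `t ↦ e^{2πit}`. -/
noncomputable def circleMap' (t : ℝ) : ℂ := Complex.exp ((2 * Real.pi * t : ℝ) * Complex.I)

/-- The ratio `g(t) = |e^{2πit} − 1| / d(t+ℤ, ℤ)` for a translation-invariant metric given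
by `D`. -/
noncomputable def circleRatio (D : ℝ → ℝ) (t : ℝ) : ℝ :=
  ‖circleMap' t - 1‖ / D t

open Real Finset

namespace CircleDist

lemma abs_exp_sub_one (x : ℝ) :
    ‖Complex.exp (x * Complex.I) - 1‖ = 2 * |Real.sin (x/2)| := by
  have h : Complex.exp (x*Complex.I) - 1
      = Complex.exp ((x/2:ℝ)*Complex.I) * (2 * Complex.sin ((x/2:ℝ):ℂ) * Complex.I) := by
    rw [Complex.sin]
    have h1 : Complex.exp (↑(x / 2) * Complex.I) * Complex.exp (↑(x/2) * Complex.I)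
        = Complex.exp (x * Complex.I) := by
      rw [← Complex.exp_add]; push_cast; ring_nf
    have h2 : Complex.exp (↑(x / 2) * Complex.I) * Complex.exp (-↑(x/2) * Complex.I) = 1 := by
      rw [← Complex.exp_add]; ring_nf; exact Complex.exp_zero
    have hI : (Complex.I:ℂ) ^ 2 = -1 := Complex.I_sq
    calc Complex.exp (x*Complex.I) - 1
        = Complex.exp (↑(x / 2) * Complex.I) * Complex.exp (↑(x/2) * Complex.I)
          - Complex.exp (↑(x / 2) * Complex.I) * Complex.exp (-↑(x/2) * Complex.I) := by
            rw [h1, h2]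
      _ = _ := by ring_nf; rw [hI]; ring
  rw [h, norm_mul, Complex.norm_exp_ofReal_mul_I, one_mul, norm_mul, norm_mul]
  rw [← Complex.ofReal_sin, Complex.norm_real, Real.norm_eq_abs, Complex.norm_I, Complex.norm_two]
  ring

lemma E_eq (t : ℝ) : ‖circleMap' t - 1‖ = 2 * |Real.sin (Real.pi * t)| := by
  rw [circleMap', abs_exp_sub_one]
  norm_num
  ring_nf

lemma circleMap'_zero : circleMap' 0 = 1 := by simp [circleMap']

lemma circleMap'_add (s t : ℝ) : circleMap' (s + t) = circleMap' s * circleMap' t := by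
  rw [circleMap', circleMap', circleMap', ← Complex.exp_add]
  push_cast; ring_nf

lemma abs_circleMap' (t : ℝ) : ‖circleMap' t‖ = 1 :=
  Complex.norm_exp_ofReal_mul_I _

lemma diff_eq (s t : ℝ) :
    ‖circleMap' s - circleMap' t‖ = ‖circleMap' (s - t) - 1‖ := by
  have : circleMap' s - circleMap' t = circleMap' t * (circleMap' (s - t) - 1) := by
    rw [mul_sub, ← circleMap'_add, mul_one]; ring_nf
  rw [this, norm_mul, abs_circleMap', one_mul]

lemma circleMap'_one : circleMap' 1 = 1 := by
  rw [circleMap']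
  rw [show ((2*Real.pi*1:ℝ):ℂ)*Complex.I = ((1:ℤ)) * (2*Real.pi*Complex.I) by push_cast; ring]
  exact Complex.exp_int_mul_two_pi_mul_I 1

lemma circleMap'_periodic : Function.Periodic (fun t => ‖circleMap' t - 1‖) 1 := by
  intro t
  simp only [circleMap'_add, circleMap'_one, mul_one]

lemma E_half : ‖circleMap' (1/2) - 1‖ = 2 := by
  rw [E_eq]
  rw [show Real.pi * (1/2) = π/2 by ring, Real.sin_pi_div_two]
  norm_num

end CircleDist
open Real Finset Set

section P2
variable (D : ℝ → ℝ)
    (hD0 : ∀ t : ℝ, D t = 0 ↔ ∃ n : ℤ, t = (n : ℝ))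
    (hDnonneg : ∀ t, 0 ≤ D t)
    (hDsymm : ∀ t, D (-t) = D t)
    (hDper : ∀ t, D (t + 1) = D t)
    (hDtri : ∀ s t, D (s + t) ≤ D s + D t)

include hD0 hDnonneg in
lemma D_pos {t : ℝ} (h1 : 0 < t) (h2 : t ≤ 1/2) : 0 < D t := by
  rcases (hDnonneg t).lt_or_eq with h | h
  · exact h
  · exfalso
    obtain ⟨n, hn⟩ := (hD0 t).1 h.symm
    subst hn
    have h0 : (0:ℤ) < n := by exact_mod_cast h1
    have h1' : (1:ℤ) ≤ n := h0
    have : (1:ℝ) ≤ n := by exact_mod_cast h1'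
    linarith

include hD0 in
lemma D_zero : D 0 = 0 := (hD0 0).2 ⟨0, by norm_num⟩

include hD0 hDtri in
lemma D_nat_mul (k : ℕ) (t : ℝ) : D (k * t) ≤ k * D t := by
  induction k with
  | zero => simp [D_zero D hD0]
  | succ k ih =>
      have h1 : ((k+1:ℕ):ℝ) * t = (k:ℝ)*t + t := by push_cast; ring
      rw [h1]
      calc D ((k:ℝ)*t + t) ≤ D ((k:ℝ)*t) + D t := hDtri _ _
        _ ≤ (k:ℝ) * D t + D t := by linarith
        _ = ((k+1:ℕ):ℝ) * D t := by push_cast; ring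

include hDper in
lemma D_int (t : ℝ) (n : ℤ) : D (t - n) = D t := by
  have : Function.Periodic D 1 := hDper
  simpa using this.sub_int_mul_eq n (x := t)

end P2

section P3
open CircleDist
variable (D : ℝ → ℝ)
    (hD0 : ∀ t : ℝ, D t = 0 ↔ ∃ n : ℤ, t = (n : ℝ))
    (hDnonneg : ∀ t, 0 ≤ D t)
    (hDsymm : ∀ t, D (-t) = D t)
    (hDper : ∀ t, D (t + 1) = D t)
    (hDtri : ∀ s t, D (s + t) ≤ D s + D t)

include hD0 hDsymm hDper in
lemma reduce (u : ℝ) : (D u = 0 ∧ ‖circleMap' u - 1‖ = 0) ∨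
    ∃ v, v ∈ Set.Ioc (0:ℝ) (1/2) ∧ D u = D v ∧
      ‖circleMap' u - 1‖ = ‖circleMap' v - 1‖ := by
  set v₀ := Int.fract u with hv₀
  have hfr : u - (⌊u⌋ : ℤ) = v₀ := rfl
  have hDu' : D u = D v₀ := by
    rw [← hfr]; exact (D_int D hDper u ⌊u⌋).symm
  have hEu : ‖circleMap' u - 1‖ = ‖circleMap' v₀ - 1‖ := by
    rw [← hfr]
    have := circleMap'_periodic.sub_int_mul_eq (x := u) ⌊u⌋
    simp only [mul_one] at this
    exact this.symm
  rcases eq_or_lt_of_le (Int.fract_nonneg u) with h0 | h0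
  · left
    constructor
    · rw [hDu', hv₀, ← h0]; exact D_zero D hD0
    · rw [hEu, hv₀, ← h0]; simp [circleMap'_zero]
  · have h1 : v₀ < 1 := Int.fract_lt_one u
    rcases le_or_gt v₀ (1/2) with h2 | h2
    · exact Or.inr ⟨v₀, ⟨h0, h2⟩, hDu', hEu⟩
    · right
      refine ⟨1 - v₀, ⟨by linarith, by linarith⟩, ?_, ?_⟩
      · rw [hDu']
        have : D (1 - v₀) = D v₀ := by
          have e1 : D (-v₀ + 1) = D (-v₀) := hDper (-v₀)
          have e2 : D (-v₀) = D v₀ := hDsymm v₀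
          rw [show (1 - v₀) = -v₀ + 1 by ring, e1, e2]
        rw [this]
      · rw [hEu, E_eq, E_eq]
        rw [show Real.pi * (1 - v₀) = Real.pi - Real.pi * v₀ by ring, Real.sin_pi_sub]

end P3


section Poincare
variable {H : Type} [NormedAddCommGroup H]

lemma shift_sum_step (m : ℕ) (G : ℤ → H) (hG : ∀ i, G (i + m) = G i) (r : ℤ) :
    ∑ i ∈ range m, G (i + (r + 1)) = ∑ i ∈ range m, G (i + r) := by
  have h1 : ∑ i ∈ range (m+1), G (i + r) = (∑ i ∈ range m, G (i + r)) + G (m + r) :=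
    sum_range_succ _ m
  have h2 : ∑ i ∈ range (m+1), G (i + r)
      = (∑ i ∈ range m, G (((i+1 : ℕ) : ℤ) + r)) + G ((0:ℕ) + r) :=
    sum_range_succ' _ m
  have h3 : ∑ i ∈ range m, G (((i+1 : ℕ) : ℤ) + r) = ∑ i ∈ range m, G (i + (r+1)) := by
    apply sum_congr rfl; intro i _; congr 1; push_cast; ring
  have h4 : G ((m:ℤ) + r) = G ((0:ℕ) + r) := by
    have := hG r
    simpa [add_comm] using this
  rw [h3] at h2
  rw [h4] at h1
  exact (add_right_cancel (h2.symm.trans h1))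

lemma periodic_shift_sum (m : ℕ) (G : ℤ → H) (hG : ∀ i, G (i + m) = G i) (r : ℤ) :
    ∑ i ∈ range m, G (i + r) = ∑ i ∈ range m, G i := by
  induction r using Int.induction_on with
  | zero => simp
  | succ r ih => rw [shift_sum_step m G hG r, ih]
  | pred r ih =>
      have step := shift_sum_step m G hG (-(r:ℤ)-1)
      rw [show (-(r:ℤ)-1+1 : ℤ) = -r by ring] at step
      rw [← step]
      exact ih

lemma cos_orth (m : ℕ) (hm : 0 < m) (d : ℤ) (hlt : d.natAbs < m) :
    ∑ k ∈ range m, Real.cos (2*π*k*d/m) = if d = 0 then (m:ℝ) else 0 := by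
  by_cases hd : d = 0
  · simp [hd]
  · simp only [hd, if_false]
    set ζ : ℂ := Complex.exp (((2*π*d/m : ℝ) : ℂ) * Complex.I) with hζ
    have hm' : (m:ℝ) ≠ 0 := Nat.cast_ne_zero.mpr hm.ne'
    have hζk : ∀ k : ℕ, ζ^k = Complex.exp (((2*π*k*d/m : ℝ) : ℂ) * Complex.I) := by
      intro k
      rw [hζ, ← Complex.exp_nat_mul]
      congr 1
      push_cast
      ring
    have hζm : ζ^m = 1 := by
      have hr : (2*π*(m:ℝ)*(d:ℝ)/m : ℝ) = (d:ℝ)*(2*π) := by field_simp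
      rw [hζk m, show (((2*π*(m:ℝ)*(d:ℝ)/m : ℝ)):ℂ) * Complex.I = ((d:ℤ):ℂ)*(2*π*Complex.I) by
        rw [hr]; push_cast; ring]
      exact Complex.exp_int_mul_two_pi_mul_I d
    have hζ1 : ζ ≠ 1 := by
      intro h
      rw [hζ, Complex.exp_eq_one_iff] at h
      obtain ⟨j, hj⟩ := h
      have hj' : ((2*π*d/m : ℝ) : ℂ) * Complex.I = (((j:ℝ) * (2*π) : ℝ) : ℂ) * Complex.I := by
        rw [hj]; push_cast; ring
      have hre : (2*π*(d:ℝ)/m : ℝ) = (j:ℝ)*(2*π) := by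
        have := mul_right_cancel₀ Complex.I_ne_zero hj'
        exact_mod_cast this
      have h2 : (2*π) * (d:ℝ) = (2*π) * ((j:ℝ)*m) := by
        field_simp at hre
        rw [hre]; ring
      have hd' : (d:ℝ) = (j:ℝ)*m :=
        mul_left_cancel₀ (by positivity : (2*π:ℝ) ≠ 0) h2
      have hdj : d = j * m := by exact_mod_cast hd'
      rcases eq_or_ne j 0 with hj0 | hj0
      · exact hd (by simp [hdj, hj0])
      · have h5 : (m:ℤ) ≤ |d| := by
          rw [hdj, abs_mul]
          calc (m:ℤ) = 1 * m := (one_mul _).symm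
            _ ≤ |j| * |(m:ℤ)| := by
                apply mul_le_mul
                · exact Int.one_le_abs hj0
                · simp
                · positivity
                · positivity
        have : (m:ℤ) ≤ d.natAbs := by rwa [Int.abs_eq_natAbs] at h5
        omega
    have geom : ∑ k ∈ range m, ζ^k = 0 := by
      rw [geom_sum_eq hζ1, hζm]
      simp
    have : ∑ k ∈ range m, Real.cos (2*π*k*d/m) = (∑ k ∈ range m, ζ^k).re := by
      rw [Complex.re_sum]
      apply sum_congr rfl
      intro k _
      rw [hζk k, Complex.exp_ofReal_mul_I_re]
    rw [this, geom, Complex.zero_re]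

variable [InnerProductSpace ℝ H]

lemma norm_sum_smul_sq (m : ℕ) (f : ℕ → ℝ) (w : ℤ → H) :
    ‖∑ i ∈ range m, f i • w i‖^2
      = ∑ i ∈ range m, ∑ j ∈ range m, (f i * f j) * (inner ℝ (w i) (w j) : ℝ) := by
  rw [← real_inner_self_eq_norm_sq, sum_inner]
  apply sum_congr rfl; intro i _
  rw [inner_sum]
  apply sum_congr rfl; intro j _
  rw [real_inner_smul_left, real_inner_smul_right]; ring

lemma parseval (m : ℕ) (hm : 0 < m) (w : ℤ → H) :
    ∑ k ∈ range m, (‖∑ i ∈ range m, Real.cos (2*π*k*i/m) • w i‖^2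
      + ‖∑ i ∈ range m, Real.sin (2*π*k*i/m) • w i‖^2)
    = m * ∑ i ∈ range m, ‖w i‖^2 := by
  calc ∑ k ∈ range m, (‖∑ i ∈ range m, Real.cos (2*π*k*i/m) • w i‖^2
      + ‖∑ i ∈ range m, Real.sin (2*π*k*i/m) • w i‖^2)
      = ∑ k ∈ range m, ∑ i ∈ range m, ∑ j ∈ range m,
          Real.cos (2*π*k*(((i:ℤ)-(j:ℤ) : ℤ) : ℝ)/m) * (inner ℝ (w i) (w j) : ℝ) := by
        apply sum_congr rfl; intro k _
        rw [norm_sum_smul_sq, norm_sum_smul_sq, ← sum_add_distrib]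
        apply sum_congr rfl; intro i _
        rw [← sum_add_distrib]
        apply sum_congr rfl; intro j _
        rw [← add_mul]
        congr 1
        rw [← Real.cos_sub]
        congr 1
        push_cast
        ring
    _ = ∑ i ∈ range m, ∑ j ∈ range m,
          (∑ k ∈ range m, Real.cos (2*π*k*(((i:ℤ)-(j:ℤ) : ℤ) : ℝ)/m))
            * (inner ℝ (w i) (w j) : ℝ) := by
        rw [sum_comm]
        apply sum_congr rfl; intro i _
        rw [sum_comm]
        apply sum_congr rfl; intro j _
        rw [sum_mul]
    _ = ∑ i ∈ range m, (m:ℝ) * (inner ℝ (w i) (w i) : ℝ) := by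
        apply sum_congr rfl; intro i hi
        have hstep : ∀ j ∈ range m,
            (∑ k ∈ range m, Real.cos (2*π*k*(((i:ℤ)-(j:ℤ) : ℤ) : ℝ)/m))
              * (inner ℝ (w i) (w j) : ℝ)
            = if j = i then (m:ℝ) * (inner ℝ (w i) (w j) : ℝ) else 0 := by
          intro j hj
          simp only [Finset.mem_range] at hi hj
          rw [cos_orth m hm _ (by omega)]
          by_cases h : (i:ℤ) - (j:ℤ) = 0
          · have hji : j = i := by omega
            simp [h, hji]
          · have hji : ¬ (j = i) := by omega
            simp [h, hji]
        rw [sum_congr rfl hstep, sum_ite_eq' (range m) i _]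
        simp only [hi, if_pos]
    _ = m * ∑ i ∈ range m, ‖w i‖^2 := by
        rw [mul_sum]
        apply sum_congr rfl; intro i _
        rw [real_inner_self_eq_norm_sq]

noncomputable def Ck (m : ℕ) (x : ℤ → H) (k : ℕ) : H :=
  ∑ i ∈ range m, Real.cos (2*π*k*i/m) • x i

noncomputable def Sk (m : ℕ) (x : ℤ → H) (k : ℕ) : H :=
  ∑ i ∈ range m, Real.sin (2*π*k*i/m) • x i

lemma coeff_shift (m : ℕ) (hm : 0 < m) (x : ℤ → H) (hx : ∀ i, x (i + m) = x i)
    (k : ℕ) (r : ℤ) :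
    (∑ i ∈ range m, Real.cos (2*π*k*i/m) • x (i + r)
      = Real.cos (2*π*k*r/m) • Ck m x k + Real.sin (2*π*k*r/m) • Sk m x k)
    ∧ (∑ i ∈ range m, Real.sin (2*π*k*i/m) • x (i + r)
      = Real.cos (2*π*k*r/m) • Sk m x k - Real.sin (2*π*k*r/m) • Ck m x k) := by
  have hm' : (m:ℝ) ≠ 0 := Nat.cast_ne_zero.mpr hm.ne'
  have harg : ∀ i : ℤ, (2*π*k*(((i + m) - r : ℤ) : ℝ)/m) = 2*π*k*(((i - r : ℤ)):ℝ)/m + k*(2*π) := by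
    intro i; push_cast; field_simp; ring
  constructor
  · set G : ℤ → H := fun i => Real.cos (2*π*k*((i - r : ℤ) : ℝ)/m) • x i with hGdef
    have hG : ∀ i, G (i + m) = G i := by
      intro i
      simp only [hGdef]
      rw [hx i, show ((i + (m:ℤ) - r : ℤ)) = ((i - r) + m : ℤ) by ring]
      congr 1
      rw [show (2*π*(k:ℝ)*(((i - r) + (m:ℤ) : ℤ) : ℝ)/m) = 2*π*k*(((i - r : ℤ)):ℝ)/m + k*(2*π) by
        push_cast; field_simp]
      exact Real.cos_add_nat_mul_two_pi _ k
    calc ∑ i ∈ range m, Real.cos (2*π*k*i/m) • x (i + r)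
        = ∑ i ∈ range m, G ((i:ℤ) + r) := by
          apply sum_congr rfl; intro i _
          simp only [hGdef]
          congr 2
          push_cast; ring
      _ = ∑ i ∈ range m, G (i:ℤ) := periodic_shift_sum m G hG r
      _ = ∑ i ∈ range m, (Real.cos (2*π*k*i/m) * Real.cos (2*π*k*r/m)
            + Real.sin (2*π*k*i/m) * Real.sin (2*π*k*r/m)) • x i := by
          apply sum_congr rfl; intro i _
          simp only [hGdef]
          congr 1
          rw [← Real.cos_sub]
          congr 1
          push_cast; ring
      _ = _ := by
          rw [Ck, Sk, smul_sum, smul_sum, ← sum_add_distrib]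
          apply sum_congr rfl; intro i _
          rw [add_smul, smul_smul, smul_smul]
          ring_nf
  · set G : ℤ → H := fun i => Real.sin (2*π*k*((i - r : ℤ) : ℝ)/m) • x i with hGdef
    have hG : ∀ i, G (i + m) = G i := by
      intro i
      simp only [hGdef]
      rw [hx i, show ((i + (m:ℤ) - r : ℤ)) = ((i - r) + m : ℤ) by ring]
      congr 1
      rw [show (2*π*(k:ℝ)*(((i - r) + (m:ℤ) : ℤ) : ℝ)/m) = 2*π*k*(((i - r : ℤ)):ℝ)/m + k*(2*π) by
        push_cast; field_simp]
      exact Real.sin_add_nat_mul_two_pi _ k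
    calc ∑ i ∈ range m, Real.sin (2*π*k*i/m) • x (i + r)
        = ∑ i ∈ range m, G ((i:ℤ) + r) := by
          apply sum_congr rfl; intro i _
          simp only [hGdef]
          congr 2
          push_cast; ring
      _ = ∑ i ∈ range m, G (i:ℤ) := periodic_shift_sum m G hG r
      _ = ∑ i ∈ range m, (Real.sin (2*π*k*i/m) * Real.cos (2*π*k*r/m)
            - Real.cos (2*π*k*i/m) * Real.sin (2*π*k*r/m)) • x i := by
          apply sum_congr rfl; intro i _
          simp only [hGdef]
          congr 1
          rw [← Real.sin_sub]
          congr 1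
          push_cast; ring
      _ = _ := by
          rw [Ck, Sk, smul_sum, smul_sum, ← sum_sub_distrib]
          apply sum_congr rfl; intro i _
          rw [sub_smul, smul_smul, smul_smul]
          ring_nf

lemma norm_comb (a b : ℝ) (u v : H) :
    ‖a•u + b•v‖^2 = a^2*‖u‖^2 + 2*(a*b)*(inner ℝ u v : ℝ) + b^2*‖v‖^2 := by
  rw [norm_add_sq_real, real_inner_smul_left, real_inner_smul_right,
    norm_smul, norm_smul]
  simp [mul_pow, sq_abs]
  ring

lemma energy_shift (m : ℕ) (hm : 0 < m) (x : ℤ → H) (hx : ∀ i, x (i + m) = x i) (r : ℤ) :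
    (m:ℝ) * ∑ i ∈ range m, ‖x (i + r) - x i‖^2
      = ∑ k ∈ range m,
          (2 - 2*Real.cos (2*π*k*r/m)) * (‖Ck m x k‖^2 + ‖Sk m x k‖^2) := by
  have hp := parseval m hm (fun i => x (i + r) - x i)
  rw [← hp]
  apply sum_congr rfl; intro k _
  obtain ⟨hc, hs⟩ := coeff_shift m hm x hx k r
  have e1 : ∑ i ∈ range m, Real.cos (2*π*k*i/m) • (x (i + r) - x i)
      = (Real.cos (2*π*k*r/m) - 1) • Ck m x k + Real.sin (2*π*k*r/m) • Sk m x k := by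
    simp only [smul_sub]
    rw [sum_sub_distrib, hc, ← Ck]
    module
  have e2 : ∑ i ∈ range m, Real.sin (2*π*k*i/m) • (x (i + r) - x i)
      = (- Real.sin (2*π*k*r/m)) • Ck m x k + (Real.cos (2*π*k*r/m) - 1) • Sk m x k := by
    simp only [smul_sub]
    rw [sum_sub_distrib, hs, ← Sk]
    module
  rw [e1, e2, norm_comb, norm_comb]
  have hcs := Real.sin_sq_add_cos_sq (2*π*k*r/m)
  nlinarith [hcs, sq_nonneg (‖Ck m x k‖), sq_nonneg (‖Sk m x k‖)]

lemma sin_ge_sin_div (m k : ℕ) (hm : 2 ≤ m) (hk1 : 1 ≤ k) (hk2 : k ≤ m - 1) :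
    Real.sin (π/m) ≤ Real.sin (π*k/m) := by
  have hm0 : (0:ℝ) < m := by positivity
  have hmk : (k:ℝ) ≤ (m:ℝ) - 1 := by
    have h : ((k:ℕ):ℝ) ≤ ((m-1 : ℕ):ℝ) := by exact_mod_cast hk2
    have h2 : ((m-1:ℕ):ℝ) = (m:ℝ) - 1 := by
      have h3 : 1 ≤ m := by omega
      push_cast [h3]
      ring
    linarith [h, h2.le]
  have hk1' : (1:ℝ) ≤ (k:ℝ) := by exact_mod_cast hk1
  have ha1 : π/m ≤ π*k/m := by
    rw [div_le_div_iff_of_pos_right hm0]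
    nlinarith [Real.pi_pos]
  have ha0 : 0 < π/m := by positivity
  have ham : π/m ≤ π/2 := by
    apply div_le_div_of_nonneg_left Real.pi_pos.le (by norm_num)
    exact_mod_cast hm
  rcases le_or_gt (π*k/m) (π/2) with h | h
  · exact Real.sin_le_sin_of_le_of_le_pi_div_two (by linarith) h ha1
  · rw [← Real.sin_pi_sub (π*k/m)]
    apply Real.sin_le_sin_of_le_of_le_pi_div_two (by linarith) (by linarith)
    have h2 : π - π*k/m = π*((m:ℝ)-k)/m := by field_simp
    rw [h2, div_le_div_iff_of_pos_right hm0]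
    nlinarith [Real.pi_pos]

theorem poincare_ineq (n : ℕ) (hn : 0 < n) (x : ℤ → H)
    (hx : ∀ i, x (i + ((2*n : ℕ) : ℤ)) = x i) :
    ∑ i ∈ range (2*n), ‖x (i + (n:ℤ)) - x i‖^2
      ≤ (1 / Real.sin (π/(2*n))^2) * ∑ i ∈ range (2*n), ‖x (i + 1) - x i‖^2 := by
  set m := 2*n with hmdef
  have hm : 0 < m := by omega
  have hm2 : 2 ≤ m := by omega
  have hm0 : (0:ℝ) < m := by positivity
  have hn0 : (0:ℝ) < n := by positivity
  set lam := Real.sin (π/m)^2 with hlam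
  have hsin0 : 0 < Real.sin (π/m) := by
    apply Real.sin_pos_of_pos_of_lt_pi
    · positivity
    · rw [div_lt_iff₀ hm0]
      have hm1 : (2:ℝ) ≤ (m:ℝ) := by exact_mod_cast hm2
      nlinarith [Real.pi_pos]
  have hlam0 : 0 < lam := by positivity
  have EA := energy_shift m hm x hx (n:ℤ)
  have EB := energy_shift m hm x hx 1
  -- termwise comparison
  have term : ∀ k ∈ range m,
      lam * ((2 - 2*Real.cos (2*π*k*((n:ℤ):ℝ)/m)) * (‖Ck m x k‖^2 + ‖Sk m x k‖^2))
      ≤ (2 - 2*Real.cos (2*π*k*((1:ℤ):ℝ)/m)) * (‖Ck m x k‖^2 + ‖Sk m x k‖^2) := by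
    intro k hk
    simp only [Finset.mem_range] at hk
    have hN : 0 ≤ ‖Ck m x k‖^2 + ‖Sk m x k‖^2 := by positivity
    have harg1 : (2*π*(k:ℝ)*((n:ℤ):ℝ)/m) = π*k := by
      push_cast [hmdef]
      field_simp
    have hcoeff : lam * (2 - 2*Real.cos (π*(k:ℝ)))
        ≤ 2 - 2*Real.cos (2*π*k*((1:ℤ):ℝ)/m) := by
      have hcos_le : Real.cos (2*π*k*((1:ℤ):ℝ)/m) ≤ 1 := Real.cos_le_one _
      rcases Nat.even_or_odd k with ⟨j, hj⟩ | ⟨j, hj⟩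
      · have : Real.cos (π*(k:ℝ)) = 1 := by
          rw [hj]
          push_cast
          rw [show π*((j:ℝ)+j) = 0 + (j:ℕ)*(2*π) by push_cast; ring,
            Real.cos_add_nat_mul_two_pi, Real.cos_zero]
        rw [this]
        nlinarith [hlam0, hcos_le]
      · have hck : Real.cos (π*(k:ℝ)) = -1 := by
          rw [hj]
          push_cast
          rw [show π*(2*(j:ℝ)+1) = π + (j:ℕ)*(2*π) by push_cast; ring,
            Real.cos_add_nat_mul_two_pi, Real.cos_pi]
        rw [hck]
        have hargk : (2*π*(k:ℝ)*((1:ℤ):ℝ)/m) = 2*(π*k/m) := by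
          push_cast; ring
        rw [hargk, Real.cos_two_mul']
        have hk1 : 1 ≤ k := by
          rcases Nat.eq_zero_or_pos k with h0 | h1
          · omega
          · exact h1
        have := sin_ge_sin_div m k hm2 hk1 (by omega)
        have hsq : Real.sin (π/m)^2 ≤ Real.sin (π*k/m)^2 := by
          apply pow_le_pow_left₀ hsin0.le this
        have hsk : Real.sin (π*(k:ℝ)/m)^2 = Real.sin ((π*k)/m)^2 := by norm_num
        nlinarith [hsq, Real.sin_sq_add_cos_sq (π*(k:ℝ)/m)]
    calc lam * ((2 - 2*Real.cos (2*π*k*((n:ℤ):ℝ)/m)) * (‖Ck m x k‖^2 + ‖Sk m x k‖^2))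
        = (lam * (2 - 2*Real.cos (π*(k:ℝ)))) * (‖Ck m x k‖^2 + ‖Sk m x k‖^2) := by
          rw [harg1]; ring
      _ ≤ (2 - 2*Real.cos (2*π*k*((1:ℤ):ℝ)/m)) * (‖Ck m x k‖^2 + ‖Sk m x k‖^2) := by
          apply mul_le_mul_of_nonneg_right hcoeff hN
  have key : lam * ((m:ℝ) * ∑ i ∈ range m, ‖x (i + (n:ℤ)) - x i‖^2)
      ≤ (m:ℝ) * ∑ i ∈ range m, ‖x (i + 1) - x i‖^2 := by
    rw [EA, EB, mul_sum]
    exact sum_le_sum term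
  have hms : π/(2*(n:ℝ)) = π/(m:ℝ) := by
    rw [show ((m:ℕ):ℝ) = 2*(n:ℝ) by push_cast [hmdef]; ring]
  rw [hms]
  have h2 : lam * (∑ i ∈ range m, ‖x (↑i + (n:ℤ)) - x ↑i‖ ^ 2)
      ≤ ∑ i ∈ range m, ‖x (↑i + 1) - x ↑i‖ ^ 2 := by
    nlinarith [key, hm0]
  rw [← hlam, div_mul_eq_mul_div, one_mul, le_div_iff₀ hlam0, mul_comm]
  exact h2

end Poincare

section Final
open CircleDist Set Finset Real

variable (D : ℝ → ℝ)
    (hD0 : ∀ t : ℝ, D t = 0 ↔ ∃ n : ℤ, t = (n : ℝ))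
    (hDnonneg : ∀ t, 0 ≤ D t)
    (hDsymm : ∀ t, D (-t) = D t)
    (hDper : ∀ t, D (t + 1) = D t)
    (hDtri : ∀ s t, D (s + t) ≤ D s + D t)

lemma g_half : circleRatio D (1/2) = 2 / D (1/2) := by
  rw [circleRatio, E_half]

lemma ratio_small (n : ℕ) (hn : 0 < n) :
    circleRatio D (1/(2*(n:ℝ))) = 2 * Real.sin (π/(2*(n:ℝ))) / D (1/(2*(n:ℝ))) := by
  have hn0 : (0:ℝ) < n := by positivity
  have hsn : 0 ≤ Real.sin (π/(2*(n:ℝ))) := by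
    apply Real.sin_nonneg_of_nonneg_of_le_pi
    · positivity
    · rw [div_le_iff₀ (by positivity)]
      have hn1 : (1:ℝ) ≤ n := by exact_mod_cast hn
      nlinarith [Real.pi_pos, hn0]
  rw [circleRatio, E_eq, show π * (1/(2*(n:ℝ))) = π/(2*(n:ℝ)) by ring,
    abs_of_nonneg hsn]

include hD0 hDtri in
lemma D_lower (n : ℕ) (hn : 0 < n) : D (1/2) ≤ n * D (1/(2*(n:ℝ))) := by
  have hn0 : (0:ℝ) < n := by positivity
  have h := D_nat_mul D hD0 hDtri n (1/(2*(n:ℝ)))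
  rw [show (n:ℝ) * (1/(2*(n:ℝ))) = 1/2 by field_simp] at h
  exact h

lemma g_le_of_small (hg : AntitoneOn (circleRatio D) (Set.Ioc (0 : ℝ) (1 / 2))) (c : ℝ)
    (hsmall : ∀ n : ℕ, 0 < n → circleRatio D (1/(2*(n:ℝ))) ≤ c) :
    ∀ t ∈ Set.Ioc (0:ℝ) (1/2), circleRatio D t ≤ c := by
  rintro t ⟨ht0, ht2⟩
  set n := max 1 ⌈1/(2*t)⌉₊ with hn
  have hn1 : 1 ≤ n := le_max_left _ _
  have hn0 : (0:ℝ) < n := by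
    have : (1:ℝ) ≤ n := by exact_mod_cast hn1
    linarith
  have hceil : 1/(2*t) ≤ (n:ℝ) := by
    calc 1/(2*t) ≤ (⌈1/(2*t)⌉₊ : ℝ) := Nat.le_ceil _
      _ ≤ (n:ℝ) := by exact_mod_cast le_max_right 1 ⌈1/(2*t)⌉₊
  have hceil' : 1 ≤ (n:ℝ)*(2*t) := by
    rw [div_le_iff₀ (by positivity)] at hceil
    linarith
  have hle : 1/(2*(n:ℝ)) ≤ t := by
    rw [div_le_iff₀ (by positivity)]
    nlinarith
  have hmem : 1/(2*(n:ℝ)) ∈ Set.Ioc (0:ℝ) (1/2) := by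
    constructor
    · positivity
    · rw [div_le_div_iff₀ (by positivity) (by norm_num)]
      have : (1:ℝ) ≤ n := by exact_mod_cast hn1
      nlinarith
  calc circleRatio D t ≤ circleRatio D (1/(2*(n:ℝ))) := hg hmem ⟨ht0, ht2⟩ hle
    _ ≤ c := hsmall n hn1

include hD0 hDnonneg hDtri in
lemma gbound_pi (hg : AntitoneOn (circleRatio D) (Set.Ioc (0 : ℝ) (1 / 2))) :
    ∀ t ∈ Set.Ioc (0:ℝ) (1/2), circleRatio D t ≤ π / D (1/2) := by
  apply g_le_of_small D hg
  intro n hn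
  have hn0 : (0:ℝ) < n := by positivity
  rw [ratio_small D n hn]
  have hD2 : 0 < D (1/2) := D_pos D hD0 hDnonneg (by norm_num) (le_refl _)
  have hDn : 0 < D (1/(2*(n:ℝ))) := by
    apply D_pos D hD0 hDnonneg (by positivity)
    rw [div_le_div_iff₀ (by positivity) (by norm_num)]
    have : (1:ℝ) ≤ n := by exact_mod_cast hn
    nlinarith
  have hlow := D_lower D hD0 hDtri n hn
  have hnum : 2 * Real.sin (π/(2*(n:ℝ))) ≤ π/(n:ℝ) := by
    have hs := Real.sin_le (by positivity : 0 ≤ π/(2*(n:ℝ)))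
    have : π/(2*(n:ℝ)) = (π/(n:ℝ))/2 := by ring
    nlinarith
  calc 2 * Real.sin (π/(2*(n:ℝ))) / D (1/(2*(n:ℝ)))
      ≤ (π/(n:ℝ)) / (D (1/2) / (n:ℝ)) := by
        apply div_le_div₀ (by positivity) hnum (by positivity)
        rw [div_le_iff₀ hn0]
        nlinarith
    _ = π / D (1/2) := by
        field_simp

include hD0 hDnonneg hDsymm hDper hDtri in
lemma core_ineq {H : Type} [NormedAddCommGroup H] [InnerProductSpace ℝ H]
    (φ : ℝ → H) (α β : ℝ) (hα : 0 < α) (hper : ∀ s, φ (s + 1) = φ s)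
    (hbl : ∀ s t : ℝ, α * D (s - t) ≤ ‖φ s - φ t‖ ∧ ‖φ s - φ t‖ ≤ β * D (s - t))
    (n : ℕ) (hn : 0 < n) :
    α * D (1/2) * Real.sin (π/(2*(n:ℝ))) ≤ β * D (1/(2*(n:ℝ))) := by
  have hn0 : (0:ℝ) < n := by positivity
  set m := 2*n with hm
  have hmpos : 0 < m := by omega
  have hm0 : (0:ℝ) < (m:ℕ) := by exact_mod_cast hmpos
  have hmr : ((m:ℕ):ℝ) = 2*(n:ℝ) := by push_cast [hm]; ring
  set x : ℤ → H := fun i => φ ((i:ℝ)/((m:ℕ):ℝ)) with hxdef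
  have hx : ∀ i : ℤ, x (i + ((m:ℕ):ℤ)) = x i := by
    intro i
    simp only [hxdef]
    rw [show (((i + ((m:ℕ):ℤ)) : ℤ):ℝ)/((m:ℕ):ℝ) = (i:ℝ)/((m:ℕ):ℝ) + 1 by
      push_cast; field_simp]
    exact hper _
  have hpoin := poincare_ineq n hn x hx
  have hhalf : ∀ i : ℤ, (((i + (n:ℤ)) : ℤ):ℝ)/((m:ℕ):ℝ) - (i:ℝ)/((m:ℕ):ℝ) = 1/2 := by
    intro i
    rw [hmr]
    push_cast
    field_simp
    ring
  have hone : ∀ i : ℤ, (((i + 1) : ℤ):ℝ)/((m:ℕ):ℝ) - (i:ℝ)/((m:ℕ):ℝ) = 1/(2*(n:ℝ)) := by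
    intro i
    rw [hmr]
    push_cast
    field_simp
    ring
  have hlow : ∀ i : ℤ, α * D (1/2) ≤ ‖x (i + (n:ℤ)) - x i‖ := by
    intro i
    have h := (hbl ((((i + (n:ℤ)) : ℤ):ℝ)/((m:ℕ):ℝ)) ((i:ℝ)/((m:ℕ):ℝ))).1
    rw [hhalf i] at h
    exact h
  have hup : ∀ i : ℤ, ‖x (i + 1) - x i‖ ≤ β * D (1/(2*(n:ℝ))) := by
    intro i
    have h := (hbl ((((i + 1) : ℤ):ℝ)/((m:ℕ):ℝ)) ((i:ℝ)/((m:ℕ):ℝ))).2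
    rw [hone i] at h
    exact h
  have hDpos : 0 ≤ α * D (1/2) := mul_nonneg hα.le (hDnonneg _)
  have hβD : 0 ≤ β * D (1/(2*(n:ℝ))) := (norm_nonneg _).trans (hup 0)
  have hsumlow : ((m:ℕ):ℝ) * (α * D (1/2))^2 ≤ ∑ i ∈ range m, ‖x (i + (n:ℤ)) - x i‖^2 := by
    calc ((m:ℕ):ℝ) * (α * D (1/2))^2 = ∑ _i ∈ range m, (α * D (1/2))^2 := by
          rw [sum_const, card_range, nsmul_eq_mul]
      _ ≤ _ := sum_le_sum fun i _ => pow_le_pow_left₀ hDpos (hlow i) 2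
  have hsumup : ∑ i ∈ range m, ‖x (i + 1) - x i‖^2 ≤ ((m:ℕ):ℝ) * (β * D (1/(2*(n:ℝ))))^2 := by
    calc ∑ i ∈ range m, ‖x (i + 1) - x i‖^2
        ≤ ∑ _i ∈ range m, (β * D (1/(2*(n:ℝ))))^2 :=
          sum_le_sum fun i _ => pow_le_pow_left₀ (norm_nonneg _) (hup i) 2
      _ = _ := by rw [sum_const, card_range, nsmul_eq_mul]
  have hsin : 0 < Real.sin (π/(2*(n:ℝ))) := by
    apply Real.sin_pos_of_pos_of_lt_pi
    · positivity
    · rw [div_lt_iff₀ (by positivity)]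
      have hn1 : (1:ℝ) ≤ n := by exact_mod_cast hn
      nlinarith [Real.pi_pos]
  have hsin2 : (0:ℝ) < Real.sin (π/(2*(n:ℝ)))^2 := by positivity
  have hpoin' : Real.sin (π/(2*(n:ℝ)))^2 * ∑ i ∈ range m, ‖x (i + (n:ℤ)) - x i‖^2
      ≤ ∑ i ∈ range m, ‖x (i + 1) - x i‖^2 := by
    have h := mul_le_mul_of_nonneg_left hpoin hsin2.le
    calc Real.sin (π/(2*(n:ℝ)))^2 * ∑ i ∈ range m, ‖x (i + (n:ℤ)) - x i‖^2
        ≤ Real.sin (π/(2*(n:ℝ)))^2 *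
            ((1 / Real.sin (π/(2*(n:ℝ)))^2) * ∑ i ∈ range m, ‖x (i + 1) - x i‖^2) := h
      _ = ∑ i ∈ range m, ‖x (i + 1) - x i‖^2 := by
          field_simp
  have hsq : (α * D (1/2) * Real.sin (π/(2*(n:ℝ))))^2 ≤ (β * D (1/(2*(n:ℝ))))^2 := by
    have hchain : ((m:ℕ):ℝ) * ((α * D (1/2) * Real.sin (π/(2*(n:ℝ))))^2)
        ≤ ((m:ℕ):ℝ) * ((β * D (1/(2*(n:ℝ))))^2) := by
      have h1 := mul_le_mul_of_nonneg_left hsumlow hsin2.le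
      calc ((m:ℕ):ℝ) * ((α * D (1/2) * Real.sin (π/(2*(n:ℝ))))^2)
          = Real.sin (π/(2*(n:ℝ)))^2 * (((m:ℕ):ℝ) * (α * D (1/2))^2) := by ring
        _ ≤ Real.sin (π/(2*(n:ℝ)))^2 * ∑ i ∈ range m, ‖x (i + (n:ℤ)) - x i‖^2 := h1
        _ ≤ ∑ i ∈ range m, ‖x (i + 1) - x i‖^2 := hpoin'
        _ ≤ _ := hsumup
    exact le_of_mul_le_mul_left hchain hm0
  have h1 := Real.sqrt_le_sqrt hsq
  rwa [Real.sqrt_sq (by positivity), Real.sqrt_sq hβD] at h1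

end Final


open CircleDist Set Filter Real

/-- let `X = ℝ/ℤ` carry the translation-invariant metric `d(s+ℤ,t+ℤ) = D(s−t)`
and suppose `g(t) = |e^{2πit}−1|/D(t)` is decreasing on `(0,1/2]`.  Then `f(t+ℤ) = e^{2πit}`
has optimal lower Lipschitz bound `g(1/2)`, optimal upper Lipschitz bound
`L = lim_{t→0⁺} g(t)`, so `dist(f) = L/g(1/2)`; every bilipschitz embedding of `X` into a
Hilbert space has distortion at least `L/g(1/2)` (so `c₂(X) = dist(f)`); and
`L/g(1/2) ≤ π/2`. -/
theorem circle_embedding_minimal_distortion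
    (D : ℝ → ℝ)
    (hD0 : ∀ t : ℝ, D t = 0 ↔ ∃ n : ℤ, t = (n : ℝ))
    (hDnonneg : ∀ t, 0 ≤ D t)
    (hDsymm : ∀ t, D (-t) = D t)
    (hDper : ∀ t, D (t + 1) = D t)
    (hDtri : ∀ s t, D (s + t) ≤ D s + D t)
    (hg : AntitoneOn (circleRatio D) (Set.Ioc (0 : ℝ) (1 / 2))) :
    ∃ L : ℝ,
      Filter.Tendsto (circleRatio D) (nhdsWithin 0 (Set.Ioi 0)) (nhds L) ∧
      IsGreatest {c : ℝ | ∀ s t : ℝ,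
        c * D (s - t) ≤ ‖circleMap' s - circleMap' t‖} (circleRatio D (1 / 2)) ∧
      IsLeast {c : ℝ | ∀ s t : ℝ,
        ‖circleMap' s - circleMap' t‖ ≤ c * D (s - t)} L ∧
      (∀ (H : Type) [NormedAddCommGroup H] [InnerProductSpace ℝ H] [CompleteSpace H]
        (φ : ℝ → H) (α β : ℝ), 0 < α → (∀ s, φ (s + 1) = φ s) →
        (∀ s t : ℝ, α * D (s - t) ≤ ‖φ s - φ t‖ ∧ ‖φ s - φ t‖ ≤ β * D (s - t)) →
        L / circleRatio D (1 / 2) ≤ β / α) ∧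
      L / circleRatio D (1 / 2) ≤ Real.pi / 2 := by
  have hD2 : 0 < D (1/2) := D_pos D hD0 hDnonneg (by norm_num) (le_refl _)
  have hghalf : circleRatio D (1/2) = 2 / D (1/2) := g_half D
  have hghalf_pos : 0 < circleRatio D (1/2) := by rw [hghalf]; positivity
  set S : Set ℝ := circleRatio D '' Set.Ioc (0:ℝ) (1/2) with hS
  have hSne : S.Nonempty := ⟨circleRatio D (1/2), mem_image_of_mem _ ⟨by norm_num, le_refl _⟩⟩
  have hgbd := gbound_pi D hD0 hDnonneg hDtri hg
  have hSbdd : BddAbove S := by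
    refine ⟨Real.pi / D (1/2), ?_⟩
    rintro y ⟨t, ht, rfl⟩
    exact hgbd t ht
  set L : ℝ := sSup S with hL
  have hL_ub : ∀ t ∈ Set.Ioc (0:ℝ) (1/2), circleRatio D t ≤ L := fun t ht =>
    le_csSup hSbdd (mem_image_of_mem _ ht)
  have hL_le : ∀ b : ℝ, (∀ t ∈ Set.Ioc (0:ℝ) (1/2), circleRatio D t ≤ b) → L ≤ b := by
    intro b hb
    apply csSup_le hSne
    rintro y ⟨t, ht, rfl⟩
    exact hb t ht
  have hLpi : L ≤ Real.pi / D (1/2) := hL_le _ hgbd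
  have hLg : circleRatio D (1/2) ≤ L := hL_ub _ ⟨by norm_num, le_refl _⟩
  have hDv_pos : ∀ v ∈ Set.Ioc (0:ℝ) (1/2), 0 < D v := fun v hv =>
    D_pos D hD0 hDnonneg hv.1 hv.2
  refine ⟨L, ?_, ⟨?_, ?_⟩, ⟨?_, ?_⟩, ?_, ?_⟩
  -- 1. Tendsto
  · rw [tendsto_order]
    constructor
    · intro a ha
      obtain ⟨y, hy, hay⟩ := exists_lt_of_lt_csSup hSne ha
      obtain ⟨t₀, ht₀, rfl⟩ := hy
      filter_upwards [Ioo_mem_nhdsGT_of_mem (Set.left_mem_Ico.mpr ht₀.1)] with t ht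
      have htm : t ∈ Set.Ioc (0:ℝ) (1/2) := ⟨ht.1, le_trans ht.2.le ht₀.2⟩
      exact lt_of_lt_of_le hay (hg htm ht₀ ht.2.le)
    · intro b hb
      filter_upwards [Ioo_mem_nhdsGT_of_mem (Set.left_mem_Ico.mpr (by norm_num : (0:ℝ) < 1/2))]
        with t ht
      exact lt_of_le_of_lt (hL_ub t ⟨ht.1, ht.2.le⟩) hb
  -- 2. IsGreatest membership
  · intro s t
    rw [CircleDist.diff_eq]
    rcases reduce D hD0 hDsymm hDper (s - t) with ⟨hDz, hEz⟩ | ⟨v, hv, hDe, hEe⟩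
    · rw [hDz, hEz, mul_zero]
    · rw [hDe, hEe]
      have hgv : circleRatio D (1/2) ≤ circleRatio D v := hg hv ⟨by norm_num, le_refl _⟩ hv.2
      have hDv : 0 < D v := hDv_pos v hv
      calc circleRatio D (1/2) * D v ≤ circleRatio D v * D v :=
            mul_le_mul_of_nonneg_right hgv hDv.le
        _ = ‖circleMap' v - 1‖ := by
            rw [circleRatio, div_mul_cancel₀ _ hDv.ne']
  -- 2'. IsGreatest upper bound
  · intro c hc
    have h := hc (1/2) 0
    rw [sub_zero, circleMap'_zero, E_half] at h
    rw [hghalf, le_div_iff₀ hD2]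
    exact h
  -- 3. IsLeast membership
  · intro s t
    rw [CircleDist.diff_eq]
    rcases reduce D hD0 hDsymm hDper (s - t) with ⟨hDz, hEz⟩ | ⟨v, hv, hDe, hEe⟩
    · rw [hDz, hEz, mul_zero]
    · rw [hDe, hEe]
      have hDv : 0 < D v := hDv_pos v hv
      calc ‖circleMap' v - 1‖ = circleRatio D v * D v := by
            rw [circleRatio, div_mul_cancel₀ _ hDv.ne']
        _ ≤ L * D v := mul_le_mul_of_nonneg_right (hL_ub v hv) hDv.le
  -- 3'. IsLeast lower bound
  · intro c hc
    apply hL_le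
    intro v hv
    have hDv : 0 < D v := hDv_pos v hv
    have h := hc v 0
    rw [sub_zero, circleMap'_zero] at h
    rw [circleRatio, div_le_iff₀ hDv]
    exact h
  -- 4. lower bound for all bilipschitz embeddings
  · intro H _ _ _ φ α β hα hper hbl
    have hsmall : ∀ n : ℕ, 0 < n →
        circleRatio D (1/(2*(n:ℝ))) ≤ 2*β/(α * D (1/2)) := by
      intro n hn
      have hn0 : (0:ℝ) < n := by positivity
      have hcore := core_ineq D hD0 hDnonneg hDsymm hDper hDtri φ α β hα hper hbl n hn
      have hDn : 0 < D (1/(2*(n:ℝ))) := by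
        apply D_pos D hD0 hDnonneg (by positivity)
        rw [div_le_div_iff₀ (by positivity) (by norm_num)]
        have hn1 : (1:ℝ) ≤ n := by exact_mod_cast hn
        nlinarith
      have hsin : 0 < Real.sin (Real.pi/(2*(n:ℝ))) := by
        apply Real.sin_pos_of_pos_of_lt_pi
        · positivity
        · rw [div_lt_iff₀ (by positivity)]
          have hn1 : (1:ℝ) ≤ n := by exact_mod_cast hn
          nlinarith [Real.pi_pos]
      rw [ratio_small D n hn, div_le_div_iff₀ hDn (by positivity)]
      nlinarith [hcore, hsin, hDn]
    have hLb : L ≤ 2*β/(α * D (1/2)) := hL_le _ (g_le_of_small D hg _ hsmall)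
    have hβpos : 0 < β := by
      have h1 := (hbl (1/2) 0).1
      have h2 := (hbl (1/2) 0).2
      rw [sub_zero] at h1 h2
      nlinarith [hD2, hα]
    have hpos : (0:ℝ) < α * D (1/2) := by positivity
    have h2 : L * (α * D (1/2)) ≤ 2*β := by
      have h3 := mul_le_mul_of_nonneg_right hLb hpos.le
      rwa [div_mul_cancel₀ _ hpos.ne'] at h3
    rw [hghalf, div_div_eq_mul_div, div_le_div_iff₀ (by norm_num : (0:ℝ) < 2) hα]
    nlinarith [h2]
  -- 5. ≤ π/2
  · have h2 : L * D (1/2) ≤ Real.pi := by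
      have h3 := mul_le_mul_of_nonneg_right hLpi hD2.le
      rwa [div_mul_cancel₀ _ hD2.ne'] at h3
    rw [hghalf, div_div_eq_mul_div, div_le_div_iff₀ (by norm_num : (0:ℝ) < 2)
      (by norm_num : (0:ℝ) < 2)]
    nlinarith [h2]
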